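/- arXiv:2605.23552 — 7 statements merged into one kernel-verified Lean document; each statement's English description precedes it below -/
import Mathlib

section
/- Let λ_1 > 0 > λ_2 ≥ λ_3 ≥ ... ≥ λ_n with s_1 := λ_1 + λ_2 + ... + λ_n ≥ 0. Then the n×n matrix whose first column is (s_1, s_1-λ_2, ..., s_1-λ_n)^T, whose (i,j) entry for j ≥ 2, i ≠ j equals -λ_j, and whose diagonal entries in positions 2,...,n are 0, is nonnegative, irreducible, and has spectrum {λ_1, λ_2, ..., λ_n}. -/
/-!
Let `P` be the identity matrix with its first column replaced by the all-ones vector. Every row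
of `A` sums to `λ₁`, so the first column of `A P` is `λ₁ 𝟙`; this gives `A P = P T` with `T`
upper triangular, having first row `(λ₁, -λ₂, …, -λₙ)` and diagonal `λ₁, …, λₙ`. As `det P = 1`,
`A` and `T` have the same characteristic polynomial. Every off-diagonal entry of `A` is `s₁ - λᵢ`
or `-λⱼ` with `i, j ≠ 1`, hence positive, which gives nonnegativity and irreducibility at once.
-/

open Matrix Polynomial

def MatNonneg {n : ℕ} (A : Matrix (Fin n) (Fin n) ℝ) : Prop := ∀ i j, 0 ≤ A i j

def MatIrred {n : ℕ} (A : Matrix (Fin n) (Fin n) ℝ) : Prop :=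
  ∀ i j : Fin n, i ≠ j → Relation.TransGen (fun a b => 0 < A a b) i j

theorem matIrred_of_offDiag_pos {n : ℕ} {A : Matrix (Fin n) (Fin n) ℝ}
    (h : ∀ i j, i ≠ j → 0 < A i j) : MatIrred A :=
  fun i j hij => .single (h i j hij)

theorem det_one_updateCol {n R : Type*} [Fintype n] [DecidableEq n] [CommRing R] (j : n)
    (v : n → R) : ((1 : Matrix n n R).updateCol j v).det = v j := by
  simpa [one_apply] using det_updateCol_sum (1 : Matrix n n R) j v

section PerfectMatrix

variable {R : Type*} [CommRing R] {m : ℕ}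

def perfectMatrix (μ : Fin (m + 1) → R) : Matrix (Fin (m + 1)) (Fin (m + 1)) R :=
  of fun i j => if j = 0 then (if i = 0 then ∑ k, μ k else (∑ k, μ k) - μ i)
    else (if i = j then 0 else -μ j)

def perfectTriangular (μ : Fin (m + 1) → R) : Matrix (Fin (m + 1)) (Fin (m + 1)) R :=
  of fun i j => if i = 0 then (if j = 0 then μ 0 else -μ j) else (if i = j then μ i else 0)

theorem perfectMatrix_mulVec_one (μ : Fin (m + 1) → R) :
    perfectMatrix μ *ᵥ 1 = fun _ => μ 0 := by
  ext i
  cases i using Fin.cases with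
  | zero =>
    simp [perfectMatrix, mulVec, dotProduct, Fin.sum_univ_succ, Fin.succ_ne_zero,
      eq_comm (a := (0 : Fin (m + 1)))]
  | succ i =>
    have h : ∀ k, (if i = k then 0 else -μ k.succ) = -μ k.succ + if i = k then μ k.succ else 0 := by
      intro k
      split_ifs <;> simp
    simp [perfectMatrix, mulVec, dotProduct, Fin.sum_univ_succ, Fin.succ_ne_zero, h,
      Finset.sum_add_distrib]

theorem perfectMatrix_mul_updateCol_one (μ : Fin (m + 1) → R) :
    perfectMatrix μ * (1 : Matrix _ _ R).updateCol 0 1 =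
      (1 : Matrix _ _ R).updateCol 0 1 * perfectTriangular μ := by
  ext i j
  rw [mul_updateCol, mul_one, perfectMatrix_mulVec_one]
  cases i using Fin.cases <;> cases j using Fin.cases <;>
    simp [mul_apply, updateCol_apply, one_apply, Fin.sum_univ_succ, perfectMatrix,
      perfectTriangular, Fin.succ_ne_zero, eq_comm (a := (0 : Fin (m + 1)))]
  split_ifs <;> ring

theorem perfectTriangular_isUpperTriangular (μ : Fin (m + 1) → R) :
    (perfectTriangular μ).IsUpperTriangular := by
  intro i j hji
  have hi : i ≠ 0 := Fin.pos_iff_ne_zero.mp ((Fin.zero_le j).trans_lt hji)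
  have hij : i ≠ j := by rintro rfl; exact lt_irrefl _ hji
  simp [perfectTriangular, hi, hij]

theorem charpoly_perfectTriangular (μ : Fin (m + 1) → R) :
    (perfectTriangular μ).charpoly = ∏ i, (X - C (μ i)) := by
  rw [charpoly_of_isUpperTriangular _ (perfectTriangular_isUpperTriangular μ)]
  refine Finset.prod_congr rfl fun i _ => ?_
  by_cases hi : i = 0 <;> simp [perfectTriangular, hi]

theorem charpoly_perfectMatrix (μ : Fin (m + 1) → R) :
    (perfectMatrix μ).charpoly = ∏ i, (X - C (μ i)) := by
  set P := (1 : Matrix (Fin (m + 1)) (Fin (m + 1)) R).updateCol 0 1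
  have hP : IsUnit P.det := by simp [P, det_one_updateCol]
  have hconj : P⁻¹ * (perfectMatrix μ * P) = perfectTriangular μ := by
    rw [perfectMatrix_mul_updateCol_one, nonsing_inv_mul_cancel_left _ _ hP]
  calc (perfectMatrix μ).charpoly = (perfectMatrix μ * P * P⁻¹).charpoly := by
        rw [mul_nonsing_inv_cancel_right _ _ hP]
    _ = (perfectTriangular μ).charpoly := by rw [charpoly_mul_comm, hconj]
    _ = ∏ i, (X - C (μ i)) := charpoly_perfectTriangular μ

theorem perfectMatrix_diag_nonneg [Preorder R] {μ : Fin (m + 1) → R} (hs : 0 ≤ ∑ i, μ i)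
    (i : Fin (m + 1)) : 0 ≤ perfectMatrix μ i i := by
  by_cases hi : i = 0 <;> simp [perfectMatrix, hi, hs]

theorem perfectMatrix_pos_of_ne [PartialOrder R] [IsOrderedAddMonoid R] {μ : Fin (m + 1) → R}
    (hneg : ∀ i, i ≠ 0 → μ i < 0) (hs : 0 ≤ ∑ i, μ i) {i j : Fin (m + 1)} (hij : i ≠ j) :
    0 < perfectMatrix μ i j := by
  by_cases hj : j = 0
  · subst hj
    simp only [perfectMatrix, of_apply, if_pos, if_neg hij]
    exact sub_pos.mpr ((hneg i hij).trans_le hs)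
  · simp only [perfectMatrix, of_apply, if_neg hj, if_neg hij]
    exact neg_pos.mpr (hneg j hj)

end PerfectMatrix

theorem stmt6_general (n : ℕ) (μ : Fin (n + 2) → ℝ)
    (hneg : ∀ i : Fin (n + 2), i ≠ 0 → μ i < 0)
    (hs : 0 ≤ ∑ i, μ i)
    (A : Matrix (Fin (n + 2)) (Fin (n + 2)) ℝ)
    (hA : ∀ i j : Fin (n + 2), A i j =
      if j = 0 then (if i = 0 then ∑ k, μ k else (∑ k, μ k) - μ i)
      else (if i = j then 0 else -μ j)) :
    MatNonneg A ∧ MatIrred A ∧ A.charpoly = ∏ i, (X - C (μ i)) := by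
  obtain rfl : A = perfectMatrix μ := Matrix.ext hA
  refine ⟨fun i j => ?_, matIrred_of_offDiag_pos fun _ _ => perfectMatrix_pos_of_ne hneg hs,
    charpoly_perfectMatrix μ⟩
  obtain rfl | hij := eq_or_ne i j
  exacts [perfectMatrix_diag_nonneg hs i, (perfectMatrix_pos_of_ne hneg hs hij).le]

theorem stmt6 (n : ℕ) (μ : Fin (n + 2) → ℝ)
    (hpos : 0 < μ 0)
    (hneg : ∀ i : Fin (n + 2), i ≠ 0 → μ i < 0)
    (hmono : ∀ i j : Fin (n + 2), i ≤ j → μ j ≤ μ i)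
    (hs : 0 ≤ ∑ i, μ i)
    (A : Matrix (Fin (n + 2)) (Fin (n + 2)) ℝ)
    (hA : ∀ i j : Fin (n + 2), A i j =
      if j = 0 then (if i = 0 then ∑ k, μ k else (∑ k, μ k) - μ i)
      else (if i = j then 0 else -μ j)) :
    MatNonneg A ∧ MatIrred A ∧ A.charpoly = ∏ i, (X - C (μ i)) :=
  stmt6_general n μ hneg hs A hA
end

section
/- Every Suleĭmanova spectrum is realizable by an irreducible nonnegative matrix. That is, if λ_1 > 0, λ_2, ..., λ_n ≤ 0 and λ_1 + λ_2 + ... + λ_n ≥ 0, then there exists an n×n irreducible nonnegative matrix with eigenvalues exactly λ_1, ..., λ_n. -/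
/-!
Let `p = ∏ (X - μ i)` over the nonzero `μ i`, of degree `N`. Writing `p = (X - μ 0) ∏ (X + β i)`
with `β i > 0` and `∑ β i ≤ μ 0`, induction on the number of factors shows that every non-leading
coefficient of `p` is `≤ 0`, and the constant one is `< 0`. So the companion matrix of `p` is
nonnegative and its positive entries contain the cycle `0 → N-1 → N-2 → ⋯ → 1 → 0`: it is
irreducible. The zero eigenvalues are then added by blowing every index `k < N` up into the fibre of
a surjection `f : Fin (n + 1) → Fin N`, copying rows and dividing columns by the fibre size. The new
matrix factors as `P (A Q)` with `P` the incidence matrix of `f` and `Q P = 1`, so by Sylvester's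
identity its characteristic polynomial is `X ^ (n + 1 - N)` times that of `A`; its positivity
pattern stays strongly connected.
-/

open Matrix Polynomial

open Finset Relation

theorem Relation.TransGen.of_surjective {α β : Type*} {r : α → α → Prop} {s : β → β → Prop}
    {f : α → β} (hf : Function.Surjective f) (h : ∀ a b, s (f a) (f b) → r a b) {a b : α}
    (hab : TransGen s (f a) (f b)) : TransGen r a b := by
  suffices ∀ x y, TransGen s x y → ∀ a b, f a = x → f b = y → TransGen r a b from
    this _ _ hab a b rfl rfl
  intro x y hxy
  induction hxy with
  | single hxy =>
    rintro a b rfl rfl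
    exact .single (h a b hxy)
  | @tail y _ _ hyz ih =>
    rintro a b rfl rfl
    obtain ⟨c, rfl⟩ := hf y
    exact (ih a c rfl rfl).tail (h c b hyz)

theorem Fin.exists_surjective {m n : ℕ} (hm : 0 < m) (hmn : m ≤ n) :
    ∃ f : Fin n → Fin m, Function.Surjective f :=
  have : Nonempty (Fin m) := ⟨⟨0, hm⟩⟩
  ⟨_, Function.invFun_surjective (Fin.castLE_injective hmn)⟩

section Suleimanova

variable {K ι : Type*} [Field K]

section
variable (s : Finset ι) (μ : ι → K) (lam : K)

theorem monic_X_sub_C_mul_prod : ((X - C lam) * ∏ i ∈ s, (X - C (μ i))).Monic :=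
  (monic_X_sub_C lam).mul (monic_prod_of_monic _ _ fun _ _ => monic_X_sub_C _)

theorem natDegree_X_sub_C_mul_prod :
    ((X - C lam) * ∏ i ∈ s, (X - C (μ i))).natDegree = #s + 1 := by
  rw [(monic_X_sub_C lam).natDegree_mul (monic_prod_of_monic _ _ fun _ _ => monic_X_sub_C _),
    natDegree_X_sub_C, natDegree_finsetProd_X_sub_C_eq_card, add_comm]

theorem coeff_card_X_sub_C_mul_prod :
    ((X - C lam) * ∏ i ∈ s, (X - C (μ i))).coeff #s = -(lam + ∑ i ∈ s, μ i) := by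
  have hnext := nextCoeff_of_natDegree_pos (p := (X - C lam) * ∏ i ∈ s, (X - C (μ i)))
    (by rw [natDegree_X_sub_C_mul_prod]; exact Nat.succ_pos _)
  rw [natDegree_X_sub_C_mul_prod, Nat.add_sub_cancel,
    (monic_X_sub_C lam).nextCoeff_mul (monic_prod_of_monic _ _ fun _ _ => monic_X_sub_C _),
    nextCoeff_X_sub_C, prod_X_sub_C_nextCoeff] at hnext
  rw [← hnext, neg_add]

end

theorem coeff_X_sub_C_mul_prod_nonpos [LinearOrder K] [IsStrictOrderedRing K] [DecidableEq ι]
    {s : Finset ι} {μ : ι → K} {lam : K} (hμ : ∀ i ∈ s, μ i ≤ 0) (hsum : 0 ≤ lam + ∑ i ∈ s, μ i)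
    {k : ℕ} (hk : k ≤ #s) : ((X - C lam) * ∏ i ∈ s, (X - C (μ i))).coeff k ≤ 0 := by
  induction s using Finset.induction_on generalizing k with
  | empty =>
    rw [card_empty, Nat.le_zero] at hk
    subst hk
    simpa [coeff_C] using hsum
  | @insert a s ha ih =>
    rw [sum_insert ha] at hsum
    have hμa := hμ a (mem_insert_self a s)
    have hμs : ∀ i ∈ s, μ i ≤ 0 := fun i hi => hμ i (mem_insert_of_mem hi)
    have hsum' : 0 ≤ lam + ∑ i ∈ s, μ i := by linarith
    rw [prod_insert ha, mul_left_comm, mul_comm]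
    rw [card_insert_of_notMem ha] at hk
    rcases k with _ | j
    · rw [mul_coeff_zero, coeff_sub, coeff_X_zero, coeff_C_zero]
      exact mul_nonpos_of_nonpos_of_nonneg (ih hμs hsum' (Nat.zero_le _)) (by linarith)
    · rw [coeff_mul_X_sub_C]
      rcases (Nat.le_of_succ_le_succ hk).lt_or_eq with hj | rfl
      · nlinarith [ih hμs hsum' hj.le, ih hμs hsum' hj]
      · rw [coeff_card_X_sub_C_mul_prod, ← natDegree_X_sub_C_mul_prod s μ lam,
          (monic_X_sub_C_mul_prod s μ lam).coeff_natDegree]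
        linarith

variable [Fintype ι] [DecidableEq ι] [DecidableEq K] {μ : ι → K} {a : ι}

theorem prod_X_sub_C_eq_X_pow_mul_prod_filter_ne_zero :
    ∏ i, (X - C (μ i)) =
      X ^ (Fintype.card ι - #{i | μ i ≠ 0}) * ∏ i with μ i ≠ 0, (X - C (μ i)) := by
  rw [← prod_mul_prod_compl {i | μ i ≠ 0}, mul_comm, ← card_compl,
    prod_congr rfl fun i hi => by rw [show μ i = 0 by simpa using hi, C_0, sub_zero], prod_const]

theorem prod_filter_ne_zero_eq_mul_prod_erase (ha : μ a ≠ 0) :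
    ∏ i with μ i ≠ 0, (X - C (μ i)) =
      (X - C (μ a)) * ∏ i ∈ ({i | μ i ≠ 0} : Finset ι).erase a, (X - C (μ i)) :=
  (mul_prod_erase _ _ (mem_filter.2 ⟨mem_univ a, ha⟩)).symm

variable [LinearOrder K] (hle : ∀ i, i ≠ a → μ i ≤ 0)
include hle

theorem neg_of_mem_filter_ne_zero_erase {i : ι} (hi : i ∈ ({i | μ i ≠ 0} : Finset ι).erase a) :
    μ i < 0 :=
  (hle i (ne_of_mem_erase hi)).lt_of_ne (mem_filter.1 (mem_of_mem_erase hi)).2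

variable [IsStrictOrderedRing K] (hpos : 0 < μ a)
include hpos

theorem suleimanova_coeff_nonpos (hs : 0 ≤ ∑ i, μ i) {k : ℕ} (hk : k < #{i | μ i ≠ 0}) :
    (∏ i with μ i ≠ 0, (X - C (μ i))).coeff k ≤ 0 := by
  have ha : a ∈ ({i | μ i ≠ 0} : Finset ι) := mem_filter.2 ⟨mem_univ a, hpos.ne'⟩
  rw [prod_filter_ne_zero_eq_mul_prod_erase hpos.ne']
  refine coeff_X_sub_C_mul_prod_nonpos (fun i hi => (neg_of_mem_filter_ne_zero_erase hle hi).le)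
    (by rwa [add_sum_erase _ μ ha, sum_filter_ne_zero]) ?_
  rw [← card_erase_add_one ha] at hk
  omega

theorem suleimanova_coeff_zero_neg : (∏ i with μ i ≠ 0, (X - C (μ i))).coeff 0 < 0 := by
  rw [coeff_zero_eq_eval_zero, prod_filter_ne_zero_eq_mul_prod_erase hpos.ne', eval_mul, eval_prod]
  simp only [eval_sub, eval_X, eval_C, zero_sub]
  exact mul_neg_of_neg_of_pos (neg_neg_of_pos hpos)
    (prod_pos fun i hi => neg_pos.2 (neg_of_mem_filter_ne_zero_erase hle hi))

end Suleimanova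

section Companion

variable {K : Type*} [Field K]

def companion (p : K[X]) : Matrix (Fin p.natDegree) (Fin p.natDegree) K :=
  of fun i j => if (j : ℕ) + 1 = i then 1 else if (j : ℕ) + 1 = p.natDegree then -p.coeff i else 0

theorem leftMulMatrix_root_eq_companion {p : K[X]} (hp : p.Monic) :
    Algebra.leftMulMatrix (AdjoinRoot.powerBasisAux' hp) (AdjoinRoot.root p) = companion p := by
  ext i j
  have hb : AdjoinRoot.powerBasisAux' hp j = AdjoinRoot.root p ^ (j : ℕ) :=
    (AdjoinRoot.powerBasis' hp).basis_eq_pow j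
  rw [Algebra.leftMulMatrix_eq_repr_mul, hb, AdjoinRoot.powerBasisAux'_repr_apply_to_fun,
    ← pow_succ', ← AdjoinRoot.mk_X, ← map_pow, AdjoinRoot.modByMonicHom_mk, companion, of_apply]
  have hdeg := degree_eq_natDegree hp.ne_zero
  rcases (show (j : ℕ) + 1 ≤ p.natDegree from j.isLt).lt_or_eq with hj | hj
  · rw [(modByMonic_eq_self_iff hp).2 (by rw [degree_X_pow, hdeg]; exact_mod_cast hj),
      coeff_X_pow, if_neg hj.ne]
    simp only [eq_comm]
  · have hlt : (X ^ p.natDegree - p).degree < p.degree := by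
      rw [← degree_neg, neg_sub]
      exact degree_sub_lt_left (by rw [degree_X_pow, hdeg]) hp.ne_zero
        (by rw [hp.leadingCoeff, leadingCoeff_X_pow])
    have hmod : X ^ p.natDegree %ₘ p = X ^ p.natDegree - p := by
      rw [← (modByMonic_eq_self_iff hp).2 hlt, sub_modByMonic, modByMonic_self hp, sub_zero]
    rw [if_neg (by omega), if_pos hj, hj, hmod, coeff_sub, coeff_X_pow, if_neg (by omega),
      zero_sub]

theorem charpoly_companion {p : K[X]} (hp : p.Monic) : (companion p).charpoly = p := by
  have h := charpoly_leftMulMatrix (AdjoinRoot.powerBasis' hp)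
  change (Algebra.leftMulMatrix (AdjoinRoot.powerBasisAux' hp) (AdjoinRoot.root p)).charpoly = _
    at h
  rwa [leftMulMatrix_root_eq_companion hp, AdjoinRoot.powerBasis'_gen,
    AdjoinRoot.minpoly_root hp.ne_zero, hp.leadingCoeff, inv_one, C_1, mul_one] at h

variable [LinearOrder K] [IsStrictOrderedRing K]

theorem companion_nonneg {p : K[X]} (hp : ∀ k < p.natDegree, p.coeff k ≤ 0)
    (i j : Fin p.natDegree) : 0 ≤ companion p i j := by
  simp only [companion, of_apply]
  split_ifs
  · exact zero_le_one
  · exact neg_nonneg.2 (hp i i.isLt)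
  · exact le_rfl

theorem reflTransGen_companion_of_le (p : K[X]) {k l : Fin p.natDegree} (hlk : l ≤ k) :
    ReflTransGen (fun i j => 0 < companion p i j) k l := by
  obtain ⟨d, hd⟩ := Nat.exists_eq_add_of_le (Fin.le_def.1 hlk)
  induction d generalizing k with
  | zero => rw [Fin.ext hd]
  | succ d ih =>
    let k' : Fin p.natDegree := ⟨l + d, by omega⟩
    have hkk' : 0 < companion p k k' := by
      simp only [companion, of_apply, k', hd, ← add_assoc, if_true, zero_lt_one]
    exact .head hkk' (ih (Fin.le_def.2 (Nat.le_add_right _ _)) rfl)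

theorem transGen_companion {p : K[X]} (hp : p.coeff 0 < 0) (k l : Fin p.natDegree) :
    TransGen (fun i j => 0 < companion p i j) k l := by
  have hN : 0 < p.natDegree := k.pos
  let first : Fin p.natDegree := ⟨0, hN⟩
  let last : Fin p.natDegree := ⟨p.natDegree - 1, by omega⟩
  have hcycle : 0 < companion p first last := by
    simp only [companion, of_apply, first, last, Nat.sub_add_cancel hN, if_true]
    rw [if_neg (by omega)]
    exact neg_pos.2 hp
  have hdown : ReflTransGen (fun i j => 0 < companion p i j) k first :=
    reflTransGen_companion_of_le p (Fin.le_def.2 (Nat.zero_le k))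
  exact (TransGen.tail' hdown hcycle).trans_left
    (reflTransGen_companion_of_le p (Fin.le_def.2 (by simp [last]; omega)))

end Companion

section Blowup

variable {ι κ K : Type*} [Fintype ι] [DecidableEq κ] [Field K]

def blowup (f : ι → κ) (A : Matrix κ κ K) : Matrix ι ι K :=
  of fun i j => A (f i) (f j) / #{j' | f j' = f j}

theorem charpoly_blowup [DecidableEq ι] [Fintype κ] [CharZero K] {f : ι → κ}
    (hf : Function.Surjective f) (A : Matrix κ κ K) :
    (blowup f A).charpoly = X ^ (Fintype.card ι - Fintype.card κ) * A.charpoly := by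
  set P : Matrix ι κ K := of fun i k => if f i = k then 1 else 0
  set Q : Matrix κ ι K := of fun k j => if f j = k then (#{j' | f j' = k} : K)⁻¹ else 0
  have hPAQ : blowup f A = P * (A * Q) := by
    ext i j
    simp only [P, Q, blowup, Matrix.mul_apply, of_apply, ite_mul, one_mul, zero_mul, mul_ite,
      mul_zero, sum_ite_eq, mem_univ, if_true, div_eq_mul_inv]
  have hQP : Q * P = 1 := by
    ext k l
    simp only [Q, P, Matrix.mul_apply, of_apply, mul_ite, mul_one, mul_zero]
    rw [Matrix.one_apply, ← sum_filter]
    split_ifs with hkl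
    · subst hkl
      have hne : (#{j' | f j' = k} : K) ≠ 0 := by
        obtain ⟨j, rfl⟩ := hf k
        exact Nat.cast_ne_zero.2 (card_ne_zero_of_mem (mem_filter.2 ⟨mem_univ j, rfl⟩))
      rw [sum_ite_of_true (by simp), sum_const, nsmul_eq_mul, mul_inv_cancel₀ hne]
    · refine sum_eq_zero fun j hj => if_neg ?_
      rw [mem_filter] at hj
      exact fun h => hkl (h.symm.trans hj.2)
  rw [hPAQ, charpoly_mul_comm_of_le _ _ (Fintype.card_le_of_surjective f hf), Matrix.mul_assoc,
    hQP, Matrix.mul_one]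

variable [LinearOrder K] [IsStrictOrderedRing K]

theorem blowup_nonneg (f : ι → κ) {A : Matrix κ κ K} (hA : ∀ k l, 0 ≤ A k l) (i j : ι) :
    0 ≤ blowup f A i j :=
  div_nonneg (hA _ _) (Nat.cast_nonneg _)

theorem blowup_pos_iff (f : ι → κ) (A : Matrix κ κ K) (i j : ι) :
    0 < blowup f A i j ↔ 0 < A (f i) (f j) :=
  div_pos_iff_of_pos_right (Nat.cast_pos.2 (card_pos.2 ⟨j, mem_filter.2 ⟨mem_univ j, rfl⟩⟩))

theorem transGen_blowup {f : ι → κ} (hf : Function.Surjective f) {A : Matrix κ κ K}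
    (hA : ∀ k l, TransGen (fun a b => 0 < A a b) k l) (i j : ι) :
    TransGen (fun a b => 0 < blowup f A a b) i j :=
  TransGen.of_surjective hf (fun a b => (blowup_pos_iff f A a b).2) (hA _ _)

end Blowup

theorem stmt8 (n : ℕ) (μ : Fin (n + 1) → ℝ)
    (hpos : 0 < μ 0)
    (hle : ∀ i : Fin (n + 1), i ≠ 0 → μ i ≤ 0)
    (hs : 0 ≤ ∑ i, μ i) :
    ∃ A : Matrix (Fin (n + 1)) (Fin (n + 1)) ℝ,
      MatNonneg A ∧ MatIrred A ∧ A.charpoly = ∏ i, (X - C (μ i)) := by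
  set p : ℝ[X] := ∏ i with μ i ≠ 0, (X - C (μ i))
  have hdeg : p.natDegree = #{i | μ i ≠ 0} := natDegree_finsetProd_X_sub_C_eq_card _ _
  obtain ⟨f, hf⟩ : ∃ f : Fin (n + 1) → Fin p.natDegree, Function.Surjective f :=
    Fin.exists_surjective (hdeg ▸ card_pos.2 ⟨0, mem_filter.2 ⟨mem_univ 0, hpos.ne'⟩⟩)
      (by simpa [hdeg] using card_filter_le univ (μ · ≠ 0))
  refine ⟨blowup f (companion p),
    blowup_nonneg f (companion_nonneg fun k hk => suleimanova_coeff_nonpos hle hpos hs (hdeg ▸ hk)),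
    fun i j _ => transGen_blowup hf (transGen_companion (suleimanova_coeff_zero_neg hle hpos)) i j,
    ?_⟩
  rw [charpoly_blowup hf, charpoly_companion (monic_prod_of_monic _ _ fun _ _ => monic_X_sub_C _),
    prod_X_sub_C_eq_X_pow_mul_prod_filter_ne_zero]
  simp only [Fintype.card_fin, hdeg]
end

section
/- Let a > b ≥ 0 be reals. Then the 4×4 matrix [[0, B],[I, 0]], where B = (1/2)[[a²+b², a²-b²],[a²-b², a²+b²]] and I is the 2×2 identity, is nonnegative, irreducible, and has spectrum {a, b, -b, -a}. -/
open Matrix Polynomial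

lemma myDetFinFour {R : Type*} [CommRing R] (A : Matrix (Fin 4) (Fin 4) R) :
    det A =
      A 0 0 * (A 1 1 * (A 2 2 * A 3 3 - A 2 3 * A 3 2)
             - A 1 2 * (A 2 1 * A 3 3 - A 2 3 * A 3 1)
             + A 1 3 * (A 2 1 * A 3 2 - A 2 2 * A 3 1))
    - A 0 1 * (A 1 0 * (A 2 2 * A 3 3 - A 2 3 * A 3 2)
             - A 1 2 * (A 2 0 * A 3 3 - A 2 3 * A 3 0)
             + A 1 3 * (A 2 0 * A 3 2 - A 2 2 * A 3 0))
    + A 0 2 * (A 1 0 * (A 2 1 * A 3 3 - A 2 3 * A 3 1)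
             - A 1 1 * (A 2 0 * A 3 3 - A 2 3 * A 3 0)
             + A 1 3 * (A 2 0 * A 3 1 - A 2 1 * A 3 0))
    - A 0 3 * (A 1 0 * (A 2 1 * A 3 2 - A 2 2 * A 3 1)
             - A 1 1 * (A 2 0 * A 3 2 - A 2 2 * A 3 0)
             + A 1 2 * (A 2 0 * A 3 1 - A 2 1 * A 3 0)) := by
  have e2 : ∀ h : 2 < 4, (⟨2, h⟩ : Fin 4) = 2 := fun _ => rfl
  have e3 : ∀ h : 3 < 4, (⟨3, h⟩ : Fin 4) = 3 := fun _ => rfl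
  have v3 : ((3 : Fin 4) : ℕ) = 3 := rfl
  have c2 : Fin.castSucc (2 : Fin 3) = (2 : Fin 4) := rfl
  rw [det_succ_row_zero, Fin.sum_univ_four]
  have h : ∀ i : Fin 4, det (A.submatrix Fin.succ i.succAbove) =
      _ := fun i => det_fin_three (A.submatrix Fin.succ i.succAbove)
  simp only [h, submatrix_apply]
  norm_num [Fin.succAbove, Fin.lt_def, Fin.succ, v3, c2, e2, e3]
  ring

theorem stmt9 (a b : ℝ) (hb : 0 ≤ b) (hab : b < a) :
    MatNonneg !![0, 0, (a^2 + b^2)/2, (a^2 - b^2)/2;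
                 0, 0, (a^2 - b^2)/2, (a^2 + b^2)/2;
                 1, 0, 0, 0;
                 0, 1, 0, 0] ∧
    MatIrred !![0, 0, (a^2 + b^2)/2, (a^2 - b^2)/2;
                0, 0, (a^2 - b^2)/2, (a^2 + b^2)/2;
                1, 0, 0, 0;
                0, 1, 0, 0] ∧
    Matrix.charpoly !![0, 0, (a^2 + b^2)/2, (a^2 - b^2)/2;
                       0, 0, (a^2 - b^2)/2, (a^2 + b^2)/2;
                       1, 0, 0, 0;
                       0, 1, 0, 0] =
      (X - C a) * (X - C b) * (X + C b) * (X + C a) := by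
  have ha : 0 < a := lt_of_le_of_lt hb hab
  have h1 : 0 < (a^2 + b^2)/2 := by positivity
  have h2 : 0 < (a^2 - b^2)/2 := by nlinarith
  set M := !![0, 0, (a^2 + b^2)/2, (a^2 - b^2)/2;
              0, 0, (a^2 - b^2)/2, (a^2 + b^2)/2;
              1, 0, 0, 0;
              0, 1, 0, 0] with hM
  have e02 : (0:ℝ) < M 0 2 := by rw [hM]; simpa using h1
  have e03 : (0:ℝ) < M 0 3 := by rw [hM]; simpa using h2
  have e12 : (0:ℝ) < M 1 2 := by rw [hM]; simpa using h2
  have e13 : (0:ℝ) < M 1 3 := by rw [hM]; simpa using h1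
  have e20 : (0:ℝ) < M 2 0 := by rw [hM]; show (0:ℝ) < 1; norm_num
  have e31 : (0:ℝ) < M 3 1 := by rw [hM]; show (0:ℝ) < 1; norm_num
  refine ⟨?_, ?_, ?_⟩
  · intro i j
    fin_cases i <;> fin_cases j <;>
      simp [hM, Matrix.vecHead, Matrix.vecTail] <;> positivity
  · intro i j hij
    fin_cases i <;> fin_cases j <;> first
      | exact absurd rfl hij
      | exact .single e02
      | exact .single e03
      | exact .single e12
      | exact .single e13
      | exact .single e20
      | exact .single e31
      | exact Relation.TransGen.tail (.single e02) e20
      | exact Relation.TransGen.tail (.single e03) e31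
      | exact Relation.TransGen.tail (.single e13) e31
      | exact Relation.TransGen.tail (.single e12) e20
      | exact Relation.TransGen.tail (.single e20) e03
      | exact Relation.TransGen.tail (.single e31) e12
      | exact Relation.TransGen.tail (Relation.TransGen.tail (.single e20) e03) e31
      | exact Relation.TransGen.tail (Relation.TransGen.tail (.single e31) e12) e20
  · have hsum : (C ((a^2+b^2)/2) : ℝ[X]) + C ((a^2-b^2)/2) = C a ^ 2 := by
      rw [← C_add, ← C_pow]; congr 1; ring
    have hdiff : (C ((a^2+b^2)/2) : ℝ[X]) - C ((a^2-b^2)/2) = C b ^ 2 := by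
      rw [← C_sub, ← C_pow]; congr 1; ring
    rw [hM, Matrix.charpoly, myDetFinFour]
    simp [charmatrix_apply, Matrix.diagonal_apply, Matrix.vecHead, Matrix.vecTail,
      Function.comp]
    linear_combination (C b ^ 2 - (X:ℝ[X])^2) * hsum
      + (C ((a^2+b^2)/2) + C ((a^2-b^2)/2) - (X:ℝ[X])^2) * hdiff
end

section
/- For n = 3: a monic real cubic x³ + k_2 x + k_3 (not equal to x³) is the characteristic polynomial of a 3×3 nonnegative matrix if and only if it is the characteristic polynomial of a 3×3 irreducible nonnegative matrix, and this holds if and only if k_2 ≤ 0 and k_3 ≤ 0. -/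
open Matrix Polynomial

lemma charpoly3 (A : Matrix (Fin 3) (Fin 3) ℝ) :
    A.charpoly = X^3 + C (-(A 0 0 + A 1 1 + A 2 2)) * X^2
      + C (A 0 0*A 1 1 - A 0 1*A 1 0 + A 0 0*A 2 2 - A 0 2*A 2 0 + A 1 1*A 2 2 - A 1 2*A 2 1) * X
      + C (-(A 0 0*A 1 1*A 2 2 - A 0 0*A 1 2*A 2 1 - A 0 1*A 1 0*A 2 2
          + A 0 1*A 1 2*A 2 0 + A 0 2*A 1 0*A 2 1 - A 0 2*A 1 1*A 2 0)) := by
  rw [Matrix.charpoly, Matrix.det_fin_three,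
    charmatrix_apply_ne A 0 1 (by decide), charmatrix_apply_ne A 0 2 (by decide),
    charmatrix_apply_ne A 1 0 (by decide), charmatrix_apply_ne A 1 2 (by decide),
    charmatrix_apply_ne A 2 0 (by decide), charmatrix_apply_ne A 2 1 (by decide),
    charmatrix_apply_eq, charmatrix_apply_eq, charmatrix_apply_eq]
  simp only [Polynomial.C_add, Polynomial.C_sub, Polynomial.C_mul, Polynomial.C_neg]
  ring

lemma irred_cycle {A : Matrix (Fin 3) (Fin 3) ℝ} (h01 : 0 < A 0 1) (h12 : 0 < A 1 2)
    (h20 : 0 < A 2 0) : MatIrred A := by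
  have t01 : Relation.TransGen (fun a b => 0 < A a b) 0 1 := .single h01
  have t12 : Relation.TransGen (fun a b => 0 < A a b) 1 2 := .single h12
  have t20 : Relation.TransGen (fun a b => 0 < A a b) 2 0 := .single h20
  intro i j hij
  fin_cases i <;> fin_cases j <;>
    first
      | exact absurd rfl hij
      | exact t01 | exact t12 | exact t20
      | exact t01.trans t12 | exact t12.trans t20 | exact t20.trans t01

lemma irred_path {A : Matrix (Fin 3) (Fin 3) ℝ} (h01 : 0 < A 0 1) (h10 : 0 < A 1 0)
    (h12 : 0 < A 1 2) (h21 : 0 < A 2 1) : MatIrred A := by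
  have t01 : Relation.TransGen (fun a b => 0 < A a b) 0 1 := .single h01
  have t10 : Relation.TransGen (fun a b => 0 < A a b) 1 0 := .single h10
  have t12 : Relation.TransGen (fun a b => 0 < A a b) 1 2 := .single h12
  have t21 : Relation.TransGen (fun a b => 0 < A a b) 2 1 := .single h21
  intro i j hij
  fin_cases i <;> fin_cases j <;>
    first
      | exact absurd rfl hij
      | exact t01 | exact t10 | exact t12 | exact t21
      | exact t01.trans t12 | exact t21.trans t10

example : !![0,1,0;(2:ℝ),0,1;3,4,0] 2 1 = 4 := by norm_num [Matrix.cons_val_two]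

lemma construct (k2 k3 : ℝ) (h2 : k2 ≤ 0) (h3 : k3 ≤ 0) (h : ¬(k2 = 0 ∧ k3 = 0)) :
    ∃ A : Matrix (Fin 3) (Fin 3) ℝ, MatNonneg A ∧ MatIrred A ∧
      A.charpoly = X ^ 3 + C k2 * X + C k3 := by
  refine ⟨!![0,1,0; -k2/2,0,1; -k3,-k2/2,0], ?_, ?_, ?_⟩
  · intro i j; fin_cases i <;> fin_cases j <;> norm_num <;> linarith
  · rcases eq_or_lt_of_le h3 with h3' | h3'
    · have h2' : k2 < 0 := by
        rcases eq_or_lt_of_le h2 with h2' | h2'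
        · exact absurd ⟨h2', h3'⟩ h
        · exact h2'
      apply irred_path <;> norm_num [Matrix.cons_val_two] <;> linarith
    · apply irred_cycle <;> norm_num [Matrix.cons_val_two] <;> linarith
  · rw [charpoly3]
    norm_num [Matrix.cons_val_two]
    have : -C (-k2/2) - C (-k2/2) = C (-(-k2/2) - -k2/2) := by
      rw [Polynomial.C_sub, Polynomial.C_neg]
    rw [this]
    congr 1
    ring

lemma cubic_coeffs {a b c k2 k3 : ℝ}
    (h : (X:ℝ[X])^3 + C a * X^2 + C b * X + C c = X^3 + C k2 * X + C k3) :
    a = 0 ∧ b = k2 ∧ c = k3 := by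
  refine ⟨?_, ?_, ?_⟩
  · have := congrArg (fun p => Polynomial.coeff p 2) h
    simpa using this
  · have := congrArg (fun p => Polynomial.coeff p 1) h
    simpa using this
  · have := congrArg (fun p => Polynomial.coeff p 0) h
    simpa using this

lemma necessary {k2 k3 : ℝ} (A : Matrix (Fin 3) (Fin 3) ℝ) (hA : MatNonneg A)
    (hc : A.charpoly = X ^ 3 + C k2 * X + C k3) : k2 ≤ 0 ∧ k3 ≤ 0 := by
  rw [charpoly3] at hc
  obtain ⟨h1, hk2, hk3⟩ := cubic_coeffs hc
  have d0 : A 0 0 = 0 := by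
    have := hA 0 0; have := hA 1 1; have := hA 2 2; linarith
  have d1 : A 1 1 = 0 := by
    have := hA 0 0; have := hA 1 1; have := hA 2 2; linarith
  have d2 : A 2 2 = 0 := by
    have := hA 0 0; have := hA 1 1; have := hA 2 2; linarith
  rw [d0, d1, d2] at hk2 hk3
  constructor
  · nlinarith [mul_nonneg (hA 0 1) (hA 1 0), mul_nonneg (hA 0 2) (hA 2 0),
      mul_nonneg (hA 1 2) (hA 2 1)]
  · nlinarith [mul_nonneg (mul_nonneg (hA 0 1) (hA 1 2)) (hA 2 0),
      mul_nonneg (mul_nonneg (hA 0 2) (hA 1 0)) (hA 2 1)]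

theorem stmt12 (k2 k3 : ℝ) (h : ¬(k2 = 0 ∧ k3 = 0)) :
    ((∃ A : Matrix (Fin 3) (Fin 3) ℝ, MatNonneg A ∧ A.charpoly = X ^ 3 + C k2 * X + C k3) ↔
      (∃ A : Matrix (Fin 3) (Fin 3) ℝ, MatNonneg A ∧ MatIrred A ∧
        A.charpoly = X ^ 3 + C k2 * X + C k3)) ∧
    ((∃ A : Matrix (Fin 3) (Fin 3) ℝ, MatNonneg A ∧ A.charpoly = X ^ 3 + C k2 * X + C k3) ↔
      (k2 ≤ 0 ∧ k3 ≤ 0)) := by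
  constructor
  · constructor
    · rintro ⟨A, hA, hc⟩
      obtain ⟨h2, h3⟩ := necessary A hA hc
      exact construct k2 k3 h2 h3 h
    · rintro ⟨A, hA, _, hc⟩
      exact ⟨A, hA, hc⟩
  · constructor
    · rintro ⟨A, hA, hc⟩
      exact necessary A hA hc
    · rintro ⟨h2, h3⟩
      obtain ⟨A, hA, _, hc⟩ := construct k2 k3 h2 h3 h
      exact ⟨A, hA, hc⟩
end

section
/- Let k_2 < 0 and 0 < k_4 ≤ k_2²/4 and k_3 < 0. Set a_{21} = -k_2/2 - √(k_2²/4 - k_4) and a_{43} = -k_2/2 + √(k_2²/4 - k_4). Then the matrix [[0,1,0,0],[a_{21},0,1,0],[-k_3,0,0,1],[0,0,a_{43},0]] is nonnegative, irreducible, and has characteristic polynomial x⁴ + k_2 x² + k_3 x + k_4. -/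
open Matrix Polynomial

private lemma charpoly_aux (a b c : ℝ) :
    Matrix.charpoly !![0, 1, 0, 0; a, 0, 1, 0; b, 0, 0, 1; 0, 0, c, 0] =
      X ^ 4 - C (a + c) * X ^ 2 - C b * X + C (a * c) := by
  rw [Matrix.charpoly]
  simp [Matrix.det_succ_row_zero, Fin.sum_univ_succ, charmatrix_apply, Matrix.one_apply,
    Matrix.diagonal_apply, Fin.succAbove]
  ring

theorem stmt14 (k2 k3 k4 : ℝ) (h2 : k2 < 0) (h3 : k3 < 0)
    (h4 : 0 < k4) (h4' : k4 ≤ k2 ^ 2 / 4) :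
    MatNonneg !![0, 1, 0, 0;
                 -k2/2 - Real.sqrt (k2 ^ 2 / 4 - k4), 0, 1, 0;
                 -k3, 0, 0, 1;
                 0, 0, -k2/2 + Real.sqrt (k2 ^ 2 / 4 - k4), 0] ∧
    MatIrred !![0, 1, 0, 0;
                -k2/2 - Real.sqrt (k2 ^ 2 / 4 - k4), 0, 1, 0;
                -k3, 0, 0, 1;
                0, 0, -k2/2 + Real.sqrt (k2 ^ 2 / 4 - k4), 0] ∧
    Matrix.charpoly !![0, 1, 0, 0;
                       -k2/2 - Real.sqrt (k2 ^ 2 / 4 - k4), 0, 1, 0;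
                       -k3, 0, 0, 1;
                       0, 0, -k2/2 + Real.sqrt (k2 ^ 2 / 4 - k4), 0] =
      X ^ 4 + C k2 * X ^ 2 + C k3 * X + C k4 := by
  set s := Real.sqrt (k2 ^ 2 / 4 - k4) with hs
  have hnn : (0:ℝ) ≤ k2 ^ 2 / 4 - k4 := by linarith
  have hs0 : 0 ≤ s := Real.sqrt_nonneg _
  have hs2 : s ^ 2 = k2 ^ 2 / 4 - k4 := Real.sq_sqrt hnn
  have hk2 : 0 < -k2/2 := by linarith
  have hc : 0 < -k2/2 + s := by linarith
  have hac : (-k2/2 - s) * (-k2/2 + s) = k4 := by nlinarith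
  have ha : 0 < -k2/2 - s := by nlinarith
  set A := !![(0:ℝ), 1, 0, 0; -k2/2 - s, 0, 1, 0; -k3, 0, 0, 1; 0, 0, -k2/2 + s, 0] with hA
  refine ⟨?_, ?_, ?_⟩
  · intro i j
    fin_cases i <;> fin_cases j <;> simp [hA, Matrix.vecHead, Matrix.vecTail] <;> linarith
  · have e01 : (0:ℝ) < A 0 1 := by simp [hA]
    have e12 : (0:ℝ) < A 1 2 := by simp [hA]
    have e20 : (0:ℝ) < A 2 0 := by simp [hA]; linarith
    have e23 : (0:ℝ) < A 2 3 := by simp [hA]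
    have e32 : (0:ℝ) < A 3 2 := by simp [hA]; linarith
    intro i j hij
    fin_cases i <;> fin_cases j <;>
      first
      | exact absurd rfl hij
      | exact Relation.TransGen.single e01
      | exact Relation.TransGen.single e12
      | exact Relation.TransGen.single e20
      | exact Relation.TransGen.single e23
      | exact Relation.TransGen.single e32
      | exact Relation.TransGen.head e01 (Relation.TransGen.single e12)
      | exact Relation.TransGen.head e01
          (Relation.TransGen.head e12 (Relation.TransGen.single e23))
      | exact Relation.TransGen.head e12 (Relation.TransGen.single e23)
      | exact Relation.TransGen.head e12 (Relation.TransGen.single e20)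
      | exact Relation.TransGen.head e20 (Relation.TransGen.single e01)
      | exact Relation.TransGen.head e32 (Relation.TransGen.single e20)
      | exact Relation.TransGen.head e32
          (Relation.TransGen.head e20 (Relation.TransGen.single e01))
  · rw [hA, charpoly_aux]
    have h1 : -k2/2 - s + (-k2/2 + s) = -k2 := by ring
    rw [h1, hac]
    simp [map_neg]
end

section
/- Let n ≥ 2, 1 ≤ q ≤ n, and k_q < 0. Then the polynomial x^n + k_q x^{n-q} is the characteristic polynomial of some n×n irreducible nonnegative matrix. -/
open Matrix Polynomial

lemma eq_of_reverse_eq {R : Type*} [CommRing R] {p q : R[X]}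
    (hd : p.natDegree = q.natDegree) (h : p.reverse = q.reverse) : p = q := by
  ext j
  by_cases hj : j ≤ p.natDegree
  · have h1 := Polynomial.coeff_reverse p (p.natDegree - j)
    have h2 := Polynomial.coeff_reverse q (p.natDegree - j)
    rw [revAt_le (Nat.sub_le _ _), Nat.sub_sub_self hj] at h1
    rw [← hd, revAt_le (Nat.sub_le _ _), Nat.sub_sub_self hj] at h2
    rw [← h1, ← h2, h]
  · rw [coeff_eq_zero_of_natDegree_lt (by omega),
      coeff_eq_zero_of_natDegree_lt (by omega)]

lemma my_charpoly_mul_comm {m : Type*} [Fintype m] [DecidableEq m]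
    (A B : Matrix m m ℝ) : (A * B).charpoly = (B * A).charpoly := by
  apply eq_of_reverse_eq
  · simp [Matrix.charpoly_natDegree_eq_dim]
  · rw [Matrix.reverse_charpoly, Matrix.reverse_charpoly]
    unfold Matrix.charpolyRev
    rw [Matrix.map_mul, Matrix.map_mul, ← Matrix.smul_mul,
      Matrix.det_one_sub_mul_comm, Matrix.mul_smul]


lemma zero_charpoly (m : ℕ) : (0 : Matrix (Fin m) (Fin m) ℝ).charpoly = X ^ m := by
  have h : charmatrix (0 : Matrix (Fin m) (Fin m) ℝ) = diagonal (fun _ => X) := by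
    ext i j
    by_cases hij : i = j <;> simp [charmatrix_apply, hij, diagonal_apply]
  rw [Matrix.charpoly, h, det_diagonal]
  simp



lemma fin_ne_add_one {N : ℕ} (x : Fin (N+2)) : x ≠ x + 1 := by
  intro h
  have hv : x.val = (x.val + 1) % (N+2) := by
    simpa [Fin.val_add] using congrArg Fin.val h
  have hlt := x.isLt
  rcases Nat.lt_or_ge (x.val + 1) (N+2) with h1 | h1
  · rw [Nat.mod_eq_of_lt h1] at hv; omega
  · have hx : x.val = N + 1 := by omega
    rw [hx] at hv; simp [Nat.mod_self] at hv

lemma cyc_charpoly (q : ℕ) [NeZero q] (c : ℝ) :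
    (Matrix.of fun a b : Fin q => if b = a + 1 then c else 0).charpoly
      = X ^ q - C (c ^ q) := by
  obtain ⟨r, rfl⟩ : ∃ r, q = r + 1 := ⟨q - 1, by have := NeZero.ne q; omega⟩
  rcases r with _ | r
  · rw [Matrix.charpoly]
    rw [show (charmatrix _).det = charmatrix (Matrix.of fun a b : Fin 1 =>
      if b = a + 1 then c else 0) 0 0 from det_unique _]
    simp [charmatrix_apply]
  · set A₀ := (Matrix.of fun a b : Fin (r+2) => if b = a + 1 then c else 0) with hA₀
    set M := charmatrix A₀ with hM
    have hlast1 : Fin.last (r+1) + 1 = 0 := by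
      apply Fin.ext
      show ((Fin.last (r+1)) + 1).val = _
      simp [Fin.val_add]
    have h0last : (0 : Fin (r+2)) ≠ Fin.last (r+1) := by
      intro h; have := congrArg Fin.val h; simp [Fin.last] at this
    show M.det = _
    rw [det_succ_column_zero]
    rw [← Finset.sum_subset (Finset.subset_univ {0, Fin.last (r+1)}) ?hvan]
    case hvan =>
      intro i _ hi
      simp only [Finset.mem_insert, Finset.mem_singleton] at hi
      push_neg at hi
      have h1 : (0 : Fin (r+2)) ≠ i + 1 := by
        intro h
        apply hi.2
        have hv : (i.val + 1) % (r+2) = 0 := by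
          simpa [Fin.val_add] using congrArg Fin.val h.symm
        have hd := Nat.le_of_dvd (by omega) (Nat.dvd_of_mod_eq_zero hv)
        have hlt := i.isLt
        apply Fin.ext
        simp only [Fin.val_last]
        omega
      have hz : M i 0 = 0 := by
        rw [hM, charmatrix_apply_ne _ _ _ hi.1]
        simp [hA₀, h1]
      rw [hz]; ring
    rw [Finset.sum_pair h0last]
    -- first term
    have hM00 : M 0 0 = X := by
      rw [hM, charmatrix_apply_eq]
      have h01 : (0 : Fin (r+2)) ≠ 0 + 1 := fin_ne_add_one (0 : Fin (r+2))
      simp [hA₀, h01]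
    have hut : (M.submatrix (0 : Fin (r+2)).succAbove Fin.succ).BlockTriangular id := by
      intro i j hji
      have hij : (j : Fin (r+1)) < i := hji
      have hne1 : (i.succ : Fin (r+2)) ≠ j.succ :=
        fun h => hij.ne' (Fin.succ_injective _ h)
      rw [Matrix.submatrix_apply, Fin.zero_succAbove, hM,
        charmatrix_apply_ne _ _ _ hne1]
      have hne : (j.succ : Fin (r+2)) ≠ i.succ + 1 := by
        intro h
        have hv := congrArg Fin.val h
        rw [Fin.val_add_one] at hv
        split at hv
        · rw [Fin.val_succ] at hv; omega
        · rw [Fin.val_succ, Fin.val_succ] at hv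
          have : (j : ℕ) < i := hij
          omega
      rw [hA₀, Matrix.of_apply, if_neg hne, map_zero, neg_zero]
    have hdiag0 : ∀ i : Fin (r+1),
        (M.submatrix (0 : Fin (r+2)).succAbove Fin.succ) i i = X := by
      intro i
      rw [Matrix.submatrix_apply, Fin.zero_succAbove, hM, charmatrix_apply_eq]
      have := fin_ne_add_one (i.succ : Fin (r+2))
      simp [hA₀, this]
    have hdet0 : (M.submatrix (0 : Fin (r+2)).succAbove Fin.succ).det = X ^ (r+1) := by
      rw [Matrix.det_of_upperTriangular hut, Finset.prod_congr rfl (fun i _ => hdiag0 i),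
        Finset.prod_const, Finset.card_univ, Fintype.card_fin]
    -- second term
    have hMlast : M (Fin.last (r+1)) 0 = -C c := by
      rw [hM, charmatrix_apply_ne _ _ _ (Ne.symm h0last), hA₀, Matrix.of_apply,
        if_pos hlast1.symm]
    have hlt : (M.submatrix (Fin.last (r+1)).succAbove Fin.succ).BlockTriangular
        OrderDual.toDual := by
      intro i j hji
      have hij : (i : Fin (r+1)) < j := hji
      have hne1 : (i.castSucc : Fin (r+2)) ≠ j.succ := by
        intro h
        have := congrArg Fin.val h
        rw [Fin.coe_castSucc, Fin.val_succ] at this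
        omega
      rw [Matrix.submatrix_apply, Fin.succAbove_last, hM,
        charmatrix_apply_ne _ _ _ hne1]
      have hne : (j.succ : Fin (r+2)) ≠ i.castSucc + 1 := by
        intro h
        have hv := congrArg Fin.val h
        rw [Fin.val_add_one] at hv
        split at hv
        · next hl =>
          have := congrArg Fin.val hl
          rw [Fin.coe_castSucc, Fin.val_last] at this
          have := i.isLt
          omega
        · rw [Fin.val_succ, Fin.coe_castSucc] at hv
          have : (i : ℕ) < j := hij
          omega
      rw [hA₀, Matrix.of_apply, if_neg hne, map_zero, neg_zero]
    have hdiagl : ∀ i : Fin (r+1),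
        (M.submatrix (Fin.last (r+1)).succAbove Fin.succ) i i = -C c := by
      intro i
      have hne1 : (i.castSucc : Fin (r+2)) ≠ i.succ := by
        intro h
        have := congrArg Fin.val h
        rw [Fin.coe_castSucc, Fin.val_succ] at this
        omega
      have heq : (i.succ : Fin (r+2)) = i.castSucc + 1 := by
        apply Fin.ext
        rw [Fin.val_succ, Fin.val_add_one]
        split
        · next h =>
          exfalso
          have := congrArg Fin.val h
          rw [Fin.coe_castSucc, Fin.val_last] at this
          have := i.isLt
          omega
        · rw [Fin.coe_castSucc]
      rw [Matrix.submatrix_apply, Fin.succAbove_last, hM,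
        charmatrix_apply_ne _ _ _ hne1, hA₀, Matrix.of_apply, if_pos heq]
    have hdetl : (M.submatrix (Fin.last (r+1)).succAbove Fin.succ).det = (-C c) ^ (r+1) := by
      rw [Matrix.det_of_lowerTriangular _ hlt, Finset.prod_congr rfl (fun i _ => hdiagl i),
        Finset.prod_const, Finset.card_univ, Fintype.card_fin]
    rw [hM00, hdet0, hMlast, hdetl]
    simp only [Fin.val_zero, Fin.val_last, pow_zero, one_mul]
    rw [map_pow, neg_pow (C c) (r+1)]
    have h : ((-1 : ℝ[X])^(r+1)) * ((-1 : ℝ[X])^(r+1)) = 1 := by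
      rw [← mul_pow]; simp
    linear_combination (-(C c)^(r+2)) * h



theorem stmt18 (n q : ℕ) (hn : 2 ≤ n) (hq1 : 1 ≤ q) (hqn : q ≤ n) (k : ℝ) (hk : k < 0) :
    ∃ A : Matrix (Fin n) (Fin n) ℝ, MatNonneg A ∧ MatIrred A ∧
      A.charpoly = X ^ n + C k * X ^ (n - q) := by
  haveI : NeZero q := ⟨by omega⟩
  set m := n - q with hm
  have hqm : q + m = n := by omega
  have hk' : (0:ℝ) < -k := by linarith
  set c : ℝ := (-k) ^ ((q:ℝ)⁻¹) with hcdef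
  have hc : 0 < c := Real.rpow_pos_of_pos hk' _
  have hcq : c ^ q = -k := Real.rpow_inv_natCast_pow hk'.le (by omega)
  set ε : ℝ := Real.sqrt (c / (2*m+2)) with hεdef
  have hε : 0 < ε := Real.sqrt_pos.2 (by positivity)
  have hε2 : ε^2 = c/(2*m+2) := Real.sq_sqrt (by positivity)
  set δ : ℝ := m * ε^2 with hδdef
  have hδ0 : 0 ≤ δ := by positivity
  have hδc : δ < c := by
    rw [hδdef, hε2]
    rw [div_eq_mul_inv, ← mul_assoc]
    rw [show (m:ℝ) * c * (2*(m:ℝ)+2)⁻¹ = c * ((m:ℝ) * (2*(m:ℝ)+2)⁻¹) by ring]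
    have h1 : (m:ℝ) * (2*(m:ℝ)+2)⁻¹ < 1 := by
      rw [mul_inv_lt_iff₀ (by positivity)]
      linarith [Nat.cast_nonneg (α := ℝ) m]
    nlinarith
  set Cq : Matrix (Fin q) (Fin q) ℝ := Matrix.of (fun a b => if b = a + 1 then c else 0) with hCq
  set C' : Matrix (Fin q) (Fin q) ℝ :=
    Matrix.of (fun a b => if b = a + 1 then (if a = 0 then c - δ else c) else 0) with hC'
  set Rm : Matrix (Fin m) (Fin q) ℝ := Matrix.of (fun _ b => if b = 1 then ε else 0) with hRm
  set S : Matrix (Fin q) (Fin m) ℝ := Matrix.of (fun a _ => if a = 0 then ε else 0) with hS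
  set Uh : Matrix (Fin q ⊕ Fin m) (Fin q ⊕ Fin m) ℝ := fromBlocks 1 0 Rm 0 with hUh
  set Vh : Matrix (Fin q ⊕ Fin m) (Fin q ⊕ Fin m) ℝ := fromBlocks C' S 0 0 with hVh
  set e : (Fin q ⊕ Fin m) ≃ Fin n := finSumFinEquiv.trans (finCongr hqm) with he
  have hUV : Uh * Vh = fromBlocks C' S (Rm * C') (Rm * S) := by
    rw [hUh, hVh, fromBlocks_multiply]
    simp
  have hSR : S * Rm = Matrix.of (fun a b => if a = 0 then (if b = 1 then δ else 0) else 0) := by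
    ext a b
    rw [Matrix.mul_apply]
    simp only [hS, hRm, Matrix.of_apply]
    rw [Finset.sum_const, Finset.card_univ, Fintype.card_fin, nsmul_eq_mul]
    split_ifs
    all_goals first | (rw [hδdef]; ring) | ring
  have hVU : Vh * Uh = fromBlocks Cq 0 0 0 := by
    rw [hUh, hVh, fromBlocks_multiply]
    have hCsum : C' * 1 + S * Rm = Cq := by
      rw [Matrix.mul_one, hSR]
      ext a b
      rw [Matrix.add_apply]
      simp only [hC', hCq, Matrix.of_apply]
      by_cases hb : b = a + 1
      · rw [if_pos hb, if_pos hb]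
        by_cases ha : a = 0
        · subst ha
          have hb1 : b = 1 := by rw [hb, zero_add]
          rw [if_pos rfl, if_pos rfl, if_pos hb1]
          ring
        · rw [if_neg ha, if_neg ha, add_zero]
      · rw [if_neg hb, if_neg hb]
        by_cases ha : a = 0
        · by_cases hb1 : b = 1
          · exfalso; apply hb; rw [hb1, ha, zero_add]
          · rw [if_pos ha, if_neg hb1, add_zero]
        · rw [if_neg ha, add_zero]
    rw [hCsum]
    simp
  -- entrywise nonnegativity of factors
  have hUnn : ∀ a b, 0 ≤ Uh a b := by
    intro a b
    rcases a with a | a <;> rcases b with b | b <;>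
      simp only [hUh, fromBlocks_apply₁₁, fromBlocks_apply₁₂, fromBlocks_apply₂₁,
        fromBlocks_apply₂₂, Matrix.zero_apply, le_refl, Matrix.one_apply, hRm, Matrix.of_apply] <;>
      (try split_ifs) <;> linarith
  have hVnn : ∀ a b, 0 ≤ Vh a b := by
    intro a b
    rcases a with a | a <;> rcases b with b | b <;>
      simp only [hVh, fromBlocks_apply₁₁, fromBlocks_apply₁₂, fromBlocks_apply₂₁,
        fromBlocks_apply₂₂, Matrix.zero_apply, le_refl, hC', hS, Matrix.of_apply] <;>
      (try split_ifs) <;> linarith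
  have hnn : ∀ a b, 0 ≤ (Uh * Vh) a b := by
    intro a b
    rw [Matrix.mul_apply]
    exact Finset.sum_nonneg fun s _ => mul_nonneg (hUnn a s) (hVnn s b)
  -- edges
  have hC'pos : ∀ a : Fin q, 0 < C' a (a + 1) := by
    intro a
    rw [hC', Matrix.of_apply, if_pos rfl]
    split_ifs
    · linarith
    · exact hc
  have hedge_cyc : ∀ a : Fin q, 0 < (Uh * Vh) (Sum.inl a) (Sum.inl (a + 1)) := by
    intro a
    rw [hUV, fromBlocks_apply₁₁]
    exact hC'pos a
  have hedge_out : ∀ t : Fin m, 0 < (Uh * Vh) (Sum.inl 0) (Sum.inr t) := by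
    intro t
    rw [hUV, fromBlocks_apply₁₂, hS, Matrix.of_apply, if_pos rfl]
    exact hε
  have hedge_in : ∀ t : Fin m, 0 < (Uh * Vh) (Sum.inr t) (Sum.inl ((1 : Fin q) + 1)) := by
    intro t
    rw [hUV, fromBlocks_apply₂₁, Matrix.mul_apply]
    rw [Finset.sum_eq_single (1 : Fin q)]
    · rw [hRm, Matrix.of_apply, if_pos rfl]
      exact mul_pos hε (hC'pos 1)
    · intro b _ hb
      rw [hRm, Matrix.of_apply, if_neg hb, zero_mul]
    · intro h
      exact absurd (Finset.mem_univ _) h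
  -- reachability
  open Fin.NatCast in
  have step1 : ∀ (a : Fin q) (d : ℕ),
      Relation.TransGen (fun x y => 0 < (Uh * Vh) x y)
        (Sum.inl a) (Sum.inl (a + ((d + 1 : ℕ) : Fin q))) := by
    intro a d
    induction d with
    | zero =>
      have h1 : (((0:ℕ) + 1 : ℕ) : Fin q) = 1 := by norm_num
      rw [h1]
      exact Relation.TransGen.single (hedge_cyc a)
    | succ d ih =>
      have h1 : a + ((d + 1 + 1 : ℕ) : Fin q) = (a + ((d + 1 : ℕ) : Fin q)) + 1 := by
        push_cast
        exact (add_assoc _ _ _).symm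
      rw [h1]
      exact ih.tail (hedge_cyc _)
  open Fin.NatCast in
  have reach : ∀ a b : Fin q,
      Relation.TransGen (fun x y => 0 < (Uh * Vh) x y) (Sum.inl a) (Sum.inl b) := by
    intro a b
    obtain ⟨d, hd⟩ : ∃ d, (b - a).val + q = d + 1 := ⟨(b - a).val + q - 1, by omega⟩
    have hcast : (((b - a).val + q : ℕ) : Fin q) = b - a := by
      rw [Nat.cast_add, Fin.cast_val_eq_self, Fin.natCast_self, add_zero]
    have hab : a + (((b - a).val + q : ℕ) : Fin q) = b := by
      rw [hcast, add_comm, sub_add_cancel]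
    have := step1 a d
    rw [← hd, hab] at this
    exact this
  refine ⟨reindex e e (Uh * Vh), ?_, ?_, ?_⟩
  · intro i j
    rw [reindex_apply, submatrix_apply]
    exact hnn _ _
  · intro i j hij
    have hall : ∀ x y : Fin q ⊕ Fin m,
        Relation.TransGen (fun x y => 0 < (Uh * Vh) x y) x y := by
      intro x y
      match x, y with
      | .inl a, .inl b => exact reach a b
      | .inl a, .inr t => exact (reach a 0).tail (hedge_out t)
      | .inr t, .inl b => exact Relation.TransGen.head (hedge_in t) (reach _ b)
      | .inr t, .inr t' =>
        exact Relation.TransGen.head (hedge_in t) ((reach _ 0).tail (hedge_out t'))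
    have hlift := Relation.TransGen.lift
      (p := fun x y => 0 < (reindex e e (Uh * Vh)) x y) e
      (fun a b h => by
        show 0 < (reindex e e (Uh * Vh)) (e a) (e b)
        rwa [reindex_apply, submatrix_apply, Equiv.symm_apply_apply, Equiv.symm_apply_apply])
      _ _ (hall (e.symm i) (e.symm j))
    rwa [Function.onFun, Equiv.apply_symm_apply, Equiv.apply_symm_apply] at hlift
  · rw [Matrix.charpoly_reindex, my_charpoly_mul_comm, hVU,
      Matrix.charpoly_fromBlocks_zero₂₁, cyc_charpoly, zero_charpoly, hcq, map_neg,
      sub_neg_eq_add, add_mul, ← pow_add, hqm]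
end

section
/- Let k_3 ≤ 0, k_4 ≤ 0 with (k_3, k_4) ≠ (0,0), k_5 = 0, and k_2 = 0. Then x⁵ + k_3 x² + k_4 x is the characteristic polynomial of the 5×5 nonnegative irreducible matrix [[0,1,0,0,0],[0,0,1,0,0],[-k_3,0,0,1,0],[0,0,0,0,1],[0,-k_4,0,0,0]] when k_3 < 0 and k_4 < 0. -/
open Matrix Polynomial

set_option maxHeartbeats 1000000 in
theorem stmt19 (k3 k4 : ℝ) (h3 : k3 < 0) (h4 : k4 < 0) :
    MatNonneg !![0, 1, 0, 0, 0;
                 0, 0, 1, 0, 0;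
                 -k3, 0, 0, 1, 0;
                 0, 0, 0, 0, 1;
                 0, -k4, 0, 0, 0] ∧
    MatIrred !![0, 1, 0, 0, 0;
                0, 0, 1, 0, 0;
                -k3, 0, 0, 1, 0;
                0, 0, 0, 0, 1;
                0, -k4, 0, 0, 0] ∧
    Matrix.charpoly !![0, 1, 0, 0, 0;
                       0, 0, 1, 0, 0;
                       -k3, 0, 0, 1, 0;
                       0, 0, 0, 0, 1;
                       0, -k4, 0, 0, 0] =
      X ^ 5 + C k3 * X ^ 2 + C k4 * X := by
  set A : Matrix (Fin 5) (Fin 5) ℝ :=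
    !![0, 1, 0, 0, 0;
       0, 0, 1, 0, 0;
       -k3, 0, 0, 1, 0;
       0, 0, 0, 0, 1;
       0, -k4, 0, 0, 0] with hA
  refine ⟨?_, ?_, ?_⟩
  · intro i j
    fin_cases i <;> fin_cases j <;> simp [hA, Matrix.vecHead, Matrix.vecTail] <;> linarith
  · have r : (fun a b => 0 < A a b) = fun a b => 0 < A a b := rfl
    have e01 : Relation.TransGen (fun a b => 0 < A a b) 0 1 :=
      Relation.TransGen.single (by norm_num [hA])
    have e12 : Relation.TransGen (fun a b => 0 < A a b) 1 2 :=
      Relation.TransGen.single (by simp [hA])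
    have e23 : Relation.TransGen (fun a b => 0 < A a b) 2 3 :=
      Relation.TransGen.single (by simp [hA])
    have e34 : Relation.TransGen (fun a b => 0 < A a b) 3 4 :=
      Relation.TransGen.single (by simp [hA])
    have e20 : Relation.TransGen (fun a b => 0 < A a b) 2 0 :=
      Relation.TransGen.single (by simp [hA]; linarith)
    have e41 : Relation.TransGen (fun a b => 0 < A a b) 4 1 :=
      Relation.TransGen.single (by simp [hA]; linarith)
    have e02 := e01.trans e12
    have e03 := e02.trans e23
    have e04 := e03.trans e34
    have e10 := e12.trans e20
    have e13 := e12.trans e23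
    have e14 := e13.trans e34
    have e21 := e20.trans e01
    have e24 := e23.trans e34
    have e30 := e34.trans (e41.trans e10)
    have e31 := e34.trans e41
    have e32 := e31.trans e12
    have e42 := e41.trans e12
    have e43 := e42.trans e23
    have e40 := e41.trans e10
    intro i j hij
    fin_cases i <;> fin_cases j <;> first | exact absurd rfl hij | assumption
  · have hc : charmatrix A =
      !![(X:ℝ[X]), -1, 0, 0, 0;
         0, X, -1, 0, 0;
         C k3, 0, X, -1, 0;
         0, 0, 0, X, -1;
         0, C k4, 0, 0, X] := by
      ext i j
      fin_cases i <;> fin_cases j <;>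
        simp [charmatrix_apply, hA, Matrix.vecHead, Matrix.vecTail]
    rw [Matrix.charpoly, hc]
    simp [Matrix.det_succ_row_zero, Fin.sum_univ_succ, Fin.succAbove, Matrix.vecHead,
      Matrix.vecTail, Fin.ext_iff]
    ring
end
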